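/- Let G be an AH-algebra. For each g ∈ G there is a uniquely determined projection g° ∈ P such that, for all h ∈ G, gh = 0 if and only if g°h = 0. Moreover, g° ∈ P ∩ CC(g). -/

import Mathlib

/-- An e-ring `(R,E)`: an associative ring `R` with unity together with a set `E ⊆ R`
of effects, satisfying the Foulis axioms.  `E⁺` is realized as the additive submonoid
closure of `E` (the set of all finite sums of effects). -/
structure ERing (R : Type*) [Ring R] where
  E : Set R
  zero_mem : (0 : R) ∈ E
  one_mem : (1 : R) ∈ E
  compl_mem : ∀ e ∈ E, 1 - e ∈ E
  epos_i : ∀ a ∈ AddSubmonoid.closure E, -a ∈ AddSubmonoid.closure E → a = 0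
  epos_ii : ∀ a ∈ AddSubmonoid.closure E, 1 - a ∈ AddSubmonoid.closure E → a ∈ E
  epos_iii : ∀ a ∈ AddSubmonoid.closure E, ∀ b ∈ AddSubmonoid.closure E,
    a * b = b * a → a * b ∈ AddSubmonoid.closure E
  epos_iv : ∀ a ∈ AddSubmonoid.closure E, ∀ b ∈ AddSubmonoid.closure E,
    a * b * a ∈ AddSubmonoid.closure E
  epos_v : ∀ a ∈ AddSubmonoid.closure E, ∀ b ∈ AddSubmonoid.closure E,
    a * b * a = 0 → a * b = 0 ∧ b * a = 0
  epos_vi : ∀ a ∈ AddSubmonoid.closure E, ∀ b ∈ AddSubmonoid.closure E,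
    (a - b) ^ 2 ∈ AddSubmonoid.closure E
  zero_ne_one : (0 : R) ≠ 1

namespace ERing

variable {R : Type*} [Ring R] (er : ERing R)

/-- `E⁺`, the set of all finite sums of effects; the positive cone of the directed group. -/
def Epos : Set R := (AddSubmonoid.closure er.E : Set R)

/-- The directed group `G = E⁺ - E⁺` of the e-ring. -/
def G : Set R := {g | ∃ a ∈ er.Epos, ∃ b ∈ er.Epos, g = a - b}

/-- The partial order on the directed group: `g ≤ h` iff `h - g ∈ E⁺`. -/
def le (g h : R) : Prop := h - g ∈ er.Epos

/-- The set of projections `P = {p ∈ G : p = p²}`. -/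
def P : Set R := {p | p ∈ er.G ∧ p = p ^ 2}

/-- The commutant in `G` of a subset `A ⊆ G`. -/
def commutant (A : Set R) : Set R := {g | g ∈ er.G ∧ ∀ a ∈ A, g * a = a * g}

/-- The bicommutant in `G` of a subset `A ⊆ G`. -/
def CC (A : Set R) : Set R := er.commutant (er.commutant A)

/-- `s` is the supremum of `A` within the subset `S` (w.r.t. the e-ring order). -/
def IsSupIn (S A : Set R) (s : R) : Prop :=
  s ∈ S ∧ (∀ a ∈ A, er.le a s) ∧ ∀ b ∈ S, (∀ a ∈ A, er.le a b) → er.le s b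

/-- `s` is the infimum of `A` within the subset `S` (w.r.t. the e-ring order). -/
def IsInfIn (S A : Set R) (s : R) : Prop :=
  s ∈ S ∧ (∀ a ∈ A, er.le s a) ∧ ∀ b ∈ S, (∀ a ∈ A, er.le b a) → er.le b s

/-- Quadratic annihilation property. -/
def HasQA : Prop := ∀ g ∈ er.G, ∀ h ∈ er.G, g * h ^ 2 * g = 0 → g * h = 0 ∧ h * g = 0

/-- Commutative Vigier property: every ascending sequence of pairwise commuting elements
of `G` bounded above in `G` has a supremum in `G` which double commutes with the sequence. -/
def HasCV : Prop :=
  ∀ g : ℕ → R, (∀ n, g n ∈ er.G) → (∀ n, er.le (g n) (g (n + 1))) →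
    (∀ m n, g m * g n = g n * g m) → (∃ b ∈ er.G, ∀ n, er.le (g n) b) →
    ∃ s, er.IsSupIn er.G (Set.range g) s ∧ s ∈ er.CC (Set.range g)

/-- `G` is an abstract Hermitian (AH) algebra: there is a semitransparent effect `½`,
`G` has quadratic annihilation, and `G` has the commutative Vigier property. -/
def IsAH : Prop := (∃ h ∈ er.E, h + h = 1) ∧ er.HasQA ∧ er.HasCV

end ERing

/-!
Scale `g²` by a central unit (a power of `½`) to an effect `e`, so that `g`, `g²` and `e` have
the same annihilators in `G` by quadratic annihilation. Let `g°` be the supremum of the commuting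
increasing sequence `1 - (1 - e)ⁿ`, given by the commutative Vigier property. The Archimedean
property of `G` (also a consequence of the Vigier property) forces `(1 - g°) e = 0`, from which
`g°` is a projection with `e g° = e`; an element `x` with `e x = 0` commutes with the sequence,
and a scaled copy `t` of `x²` makes `1 - t` an upper bound, whence `t g° = 0` and `g° x = 0`.
Uniqueness holds for any two projections with the same annihilators.
-/

namespace ERing

variable {R : Type*} [Ring R] {er : ERing R}

lemma zero_mem_Epos : (0 : R) ∈ er.Epos := (AddSubmonoid.closure er.E).zero_mem

lemma mem_Epos_of_mem_E {a : R} (ha : a ∈ er.E) : a ∈ er.Epos := AddSubmonoid.subset_closure ha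

lemma one_mem_Epos : (1 : R) ∈ er.Epos := mem_Epos_of_mem_E er.one_mem

lemma add_mem_Epos {a b : R} (ha : a ∈ er.Epos) (hb : b ∈ er.Epos) : a + b ∈ er.Epos :=
  (AddSubmonoid.closure er.E).add_mem ha hb

lemma nsmul_mem_Epos {a : R} (ha : a ∈ er.Epos) (n : ℕ) : n • a ∈ er.Epos :=
  (AddSubmonoid.closure er.E).nsmul_mem ha n

lemma natCast_mem_Epos (n : ℕ) : (n : R) ∈ er.Epos := by
  simpa using nsmul_mem_Epos (one_mem_Epos (er := er)) n

lemma mul_mem_Epos {a b : R} (ha : a ∈ er.Epos) (hb : b ∈ er.Epos) (hab : Commute a b) :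
    a * b ∈ er.Epos :=
  er.epos_iii a ha b hb hab

lemma pow_mem_Epos {a : R} (ha : a ∈ er.Epos) (n : ℕ) : a ^ n ∈ er.Epos := by
  induction n with
  | zero => simpa using one_mem_Epos
  | succ n ih => rw [pow_succ]; exact mul_mem_Epos ih ha ((Commute.refl a).pow_left n)

lemma eq_zero_of_mem_Epos_of_neg_mem_Epos {a : R} (ha : a ∈ er.Epos) (hna : -a ∈ er.Epos) :
    a = 0 :=
  er.epos_i a ha hna

lemma exists_natCast_sub_mem_Epos {a : R} (ha : a ∈ er.Epos) :
    ∃ N : ℕ, (N : R) - a ∈ er.Epos := by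
  induction ha using AddSubmonoid.closure_induction with
  | mem x hx => exact ⟨1, by simpa using mem_Epos_of_mem_E (er.compl_mem x hx)⟩
  | zero => exact ⟨0, by simpa using zero_mem_Epos⟩
  | add x y _ _ ihx ihy =>
    obtain ⟨N, hN⟩ := ihx
    obtain ⟨M, hM⟩ := ihy
    refine ⟨N + M, ?_⟩
    have h : ((N + M : ℕ) : R) - (x + y) = ((N : R) - x) + ((M : R) - y) := by push_cast; abel
    rw [h]
    exact add_mem_Epos hN hM

lemma mem_G_of_mem_Epos {a : R} (ha : a ∈ er.Epos) : a ∈ er.G :=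
  ⟨a, ha, 0, zero_mem_Epos, (sub_zero a).symm⟩

lemma one_mem_G : (1 : R) ∈ er.G := mem_G_of_mem_Epos one_mem_Epos

lemma sub_mem_G {x y : R} (hx : x ∈ er.G) (hy : y ∈ er.G) : x - y ∈ er.G := by
  obtain ⟨a, ha, b, hb, rfl⟩ := hx
  obtain ⟨c, hc, d, hd, rfl⟩ := hy
  exact ⟨a + d, add_mem_Epos ha hd, b + c, add_mem_Epos hb hc, by abel⟩

lemma sq_mem_Epos_of_mem_G {x : R} (hx : x ∈ er.G) : x ^ 2 ∈ er.Epos := by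
  obtain ⟨a, ha, b, hb, rfl⟩ := hx
  exact er.epos_vi a ha b hb

lemma HasQA.mul_eq_zero_comm (hQA : er.HasQA) {u v : R} (hu : u ∈ er.G) (hv : v ∈ er.G)
    (huv : u * v = 0) : v * u = 0 := by
  refine (hQA v hv u hu ?_).1
  rw [sq, mul_assoc, mul_assoc, huv, mul_zero, mul_zero]

lemma HasQA.mul_eq_zero_iff_sq_mul_eq_zero (hQA : er.HasQA) {u v : R} (hu : u ∈ er.G)
    (hv : v ∈ er.G) : u * v = 0 ↔ u ^ 2 * v = 0 := by
  refine ⟨fun h => by rw [sq, mul_assoc, h, mul_zero], fun h => (hQA v hv u hu ?_).2⟩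
  rw [mul_assoc, h, mul_zero]

lemma HasCV.eq_zero_of_forall_nsmul_le_one (hCV : er.HasCV) {x : R} (hx : x ∈ er.Epos)
    (hle : ∀ n : ℕ, 1 - n • x ∈ er.Epos) : x = 0 := by
  obtain ⟨s, ⟨hsG, hub, hlub⟩, -⟩ := hCV (fun n => n • x)
    (fun n => mem_G_of_mem_Epos (nsmul_mem_Epos hx n))
    (fun n => by rw [le, succ_nsmul, add_sub_cancel_left]; exact hx)
    (fun m n => (((Commute.refl x).smul_left m).smul_right n).eq)
    ⟨1, one_mem_G, hle⟩
  have hsx : s - x - s ∈ er.Epos := by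
    refine hlub (s - x) (sub_mem_G hsG (mem_G_of_mem_Epos hx)) ?_
    rintro _ ⟨n, rfl⟩
    have h : s - (n + 1) • x ∈ er.Epos := hub _ ⟨n + 1, rfl⟩
    rwa [succ_nsmul, sub_add_eq_sub_sub_swap] at h
  exact eq_zero_of_mem_Epos_of_neg_mem_Epos hx (by simpa using hsx)

lemma exists_central_unit_mul_mem_unitInterval (hhalf : ∃ h ∈ er.E, h + h = 1) {a : R}
    (ha : a ∈ er.Epos) :
    ∃ c : R, IsUnit c ∧ (∀ z, Commute c z) ∧ c * a ∈ er.Epos ∧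
      1 - c * a ∈ er.Epos := by
  obtain ⟨hl, hlE, hh⟩ := hhalf
  let two : Rˣ := ⟨2, hl, by rw [two_mul, hh], by rw [mul_two, hh]⟩
  have hcomm : ∀ z, Commute hl z := fun z => (Commute.ofNat_left 2 z).units_inv_left (u := two)
  obtain ⟨N, hN⟩ := exists_natCast_sub_mem_Epos ha
  have hc : hl ^ N ∈ er.Epos := pow_mem_Epos (mem_Epos_of_mem_E hlE) N
  refine ⟨hl ^ N, two⁻¹.isUnit.pow N, fun z => (hcomm z).pow_left N,
    mul_mem_Epos hc ha ((hcomm a).pow_left N), ?_⟩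
  have hbound : (2 : R) ^ N - a ∈ er.Epos := by
    have h := add_mem_Epos (natCast_mem_Epos (er := er) (2 ^ N - N)) hN
    rwa [Nat.cast_sub Nat.lt_two_pow_self.le, sub_add_sub_cancel, Nat.cast_pow,
      Nat.cast_ofNat] at h
  have hscale : 1 - hl ^ N * a = hl ^ N * ((2 : R) ^ N - a) := by
    rw [mul_sub, ← (hcomm 2).mul_pow, mul_two, hh, one_pow]
  rw [hscale]
  exact mul_mem_Epos hc hbound ((hcomm _).pow_left N)

lemma commute_one_sub_self (e : R) : Commute (1 - e) e :=
  (Commute.one_left e).sub_left (Commute.refl e)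

def carrierSeq (e : R) (n : ℕ) : R := 1 - (1 - e) ^ n

lemma one_sub_carrierSeq (e : R) (n : ℕ) : 1 - carrierSeq e n = (1 - e) ^ n :=
  sub_sub_cancel _ _

lemma carrierSeq_zero (e : R) : carrierSeq e 0 = 0 := by
  simp [carrierSeq]

lemma carrierSeq_succ (e : R) (n : ℕ) :
    carrierSeq e (n + 1) = carrierSeq e n + (1 - e) ^ n * e := by
  simp only [carrierSeq, pow_succ]
  noncomm_ring

lemma commute_carrierSeq_right {y e : R} (h : Commute y e) (n : ℕ) :
    Commute y (carrierSeq e n) :=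
  (Commute.one_right y).sub_right (((Commute.one_right y).sub_right h).pow_right n)

lemma commute_carrierSeq (e : R) (m n : ℕ) : Commute (carrierSeq e m) (carrierSeq e n) :=
  commute_carrierSeq_right (commute_carrierSeq_right (Commute.refl e) m).symm n

lemma carrierSeq_mul_eq_zero {e x : R} (hex : e * x = 0) (n : ℕ) : carrierSeq e n * x = 0 := by
  induction n with
  | zero => rw [carrierSeq_zero, zero_mul]
  | succ n ih => rw [carrierSeq_succ, add_mul, ih, mul_assoc, hex, mul_zero, zero_add]

lemma mul_carrierSeq_eq_zero {e x : R} (hxe : x * e = 0) (n : ℕ) : x * carrierSeq e n = 0 := by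
  induction n with
  | zero => rw [carrierSeq_zero, mul_zero]
  | succ n ih =>
    rw [carrierSeq_succ, mul_add, ih,
      ((commute_one_sub_self e).pow_left n).eq, ← mul_assoc, hxe,
      zero_mul, zero_add]

section Effect

variable {e : R}

lemma carrierSeq_succ_sub_mem_Epos (he : e ∈ er.Epos) (he1 : 1 - e ∈ er.Epos) (n : ℕ) :
    carrierSeq e (n + 1) - carrierSeq e n ∈ er.Epos := by
  rw [carrierSeq_succ, add_sub_cancel_left]
  exact mul_mem_Epos (pow_mem_Epos he1 n) he
    ((commute_one_sub_self e).pow_left n)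

lemma carrierSeq_mem_Epos (he : e ∈ er.Epos) (he1 : 1 - e ∈ er.Epos) (n : ℕ) :
    carrierSeq e n ∈ er.Epos := by
  induction n with
  | zero => rw [carrierSeq_zero]; exact zero_mem_Epos
  | succ n ih =>
    simpa using add_mem_Epos ih (carrierSeq_succ_sub_mem_Epos he he1 n)

lemma exists_isSupIn_carrierSeq (hCV : er.HasCV) (he : e ∈ er.Epos) (he1 : 1 - e ∈ er.Epos) :
    ∃ p, er.IsSupIn er.G (Set.range (carrierSeq e)) p ∧
      p ∈ er.CC (Set.range (carrierSeq e)) :=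
  hCV _ (fun n => mem_G_of_mem_Epos (carrierSeq_mem_Epos he he1 n))
    (carrierSeq_succ_sub_mem_Epos he he1) (fun m n => (commute_carrierSeq e m n).eq)
    ⟨1, one_mem_G, fun n => by rw [le, one_sub_carrierSeq]; exact pow_mem_Epos he1 n⟩

variable {p : R}

lemma commute_of_mem_CC_range_carrierSeq (hp : p ∈ er.CC (Set.range (carrierSeq e))) {y : R}
    (hy : y ∈ er.G) (hye : Commute y e) : Commute y p := by
  refine (hp.2 y ⟨hy, ?_⟩).symm
  rintro _ ⟨n, rfl⟩
  exact (commute_carrierSeq_right hye n).eq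

lemma mem_Epos_of_isSupIn_carrierSeq (hsup : er.IsSupIn er.G (Set.range (carrierSeq e)) p) :
    p ∈ er.Epos := by
  simpa [le, carrierSeq_zero] using hsup.2.1 _ ⟨0, rfl⟩

lemma one_sub_mem_Epos_of_isSupIn_carrierSeq (he1 : 1 - e ∈ er.Epos)
    (hsup : er.IsSupIn er.G (Set.range (carrierSeq e)) p) : 1 - p ∈ er.Epos := by
  refine hsup.2.2 1 one_mem_G ?_
  rintro _ ⟨n, rfl⟩
  rw [le, one_sub_carrierSeq]
  exact pow_mem_Epos he1 n

lemma one_sub_mul_eq_zero_of_isSupIn_carrierSeq (hCV : er.HasCV) (he : e ∈ er.Epos)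
    (he1 : 1 - e ∈ er.Epos) (hsup : er.IsSupIn er.G (Set.range (carrierSeq e)) p)
    (hcc : p ∈ er.CC (Set.range (carrierSeq e))) : (1 - p) * e = 0 := by
  have hq : 1 - p ∈ er.Epos := one_sub_mem_Epos_of_isSupIn_carrierSeq he1 hsup
  have hqe : Commute (1 - p) e := (Commute.one_left e).sub_left
    (commute_of_mem_CC_range_carrierSeq hcc (mem_G_of_mem_Epos he) (Commute.refl e)).symm
  -- each increment `(1 - e)ⁿ e` of the sequence dominates `(1 - p) e`
  have hle : ∀ n : ℕ, carrierSeq e n - n • ((1 - p) * e) ∈ er.Epos := by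
    intro n
    induction n with
    | zero => simpa [carrierSeq_zero] using zero_mem_Epos
    | succ n ih =>
      have hsplit : carrierSeq e (n + 1) - (n + 1) • ((1 - p) * e)
          = (carrierSeq e n - n • ((1 - p) * e)) + ((1 - e) ^ n - (1 - p)) * e := by
        rw [carrierSeq_succ, succ_nsmul, sub_mul ((1 - e) ^ n)]; abel
      have hstep : (1 - e) ^ n - (1 - p) = p - carrierSeq e n := by
        rw [← one_sub_carrierSeq]; abel
      rw [hsplit]
      refine add_mem_Epos ih (mul_mem_Epos ?_ he ?_)
      · rw [hstep]; exact hsup.2.1 _ ⟨n, rfl⟩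
      · exact ((commute_one_sub_self e).pow_left n).sub_left hqe
  refine hCV.eq_zero_of_forall_nsmul_le_one (mul_mem_Epos hq he hqe) fun n => ?_
  have h : 1 - n • ((1 - p) * e) = (carrierSeq e n - n • ((1 - p) * e)) + (1 - e) ^ n := by
    rw [← one_sub_carrierSeq]; abel
  rw [h]
  exact add_mem_Epos (hle n) (pow_mem_Epos he1 n)

lemma eq_sq_of_isSupIn_carrierSeq (hCV : er.HasCV) (he : e ∈ er.Epos) (he1 : 1 - e ∈ er.Epos)
    (hsup : er.IsSupIn er.G (Set.range (carrierSeq e)) p)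
    (hcc : p ∈ er.CC (Set.range (carrierSeq e))) : p = p ^ 2 := by
  have hp : p ∈ er.Epos := mem_Epos_of_isSupIn_carrierSeq hsup
  have hq : 1 - p ∈ er.Epos := one_sub_mem_Epos_of_isSupIn_carrierSeq he1 hsup
  have hqe : (1 - p) * e = 0 := one_sub_mul_eq_zero_of_isSupIn_carrierSeq hCV he he1 hsup hcc
  have hpf : ∀ n, p * carrierSeq e n = carrierSeq e n := fun n => by
    have h := mul_carrierSeq_eq_zero hqe n
    rwa [sub_mul, one_mul, sub_eq_zero, eq_comm] at h
  have hle : p ^ 2 - p ∈ er.Epos := by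
    refine hsup.2.2 (p ^ 2) (mem_G_of_mem_Epos (pow_mem_Epos hp 2)) ?_
    rintro _ ⟨n, rfl⟩
    have hcomm : Commute (carrierSeq e n) p := commute_of_mem_CC_range_carrierSeq hcc
      (mem_G_of_mem_Epos (carrierSeq_mem_Epos he he1 n))
      (commute_carrierSeq_right (Commute.refl e) n).symm
    rw [le, sq, ← hpf n, ← mul_sub]
    exact mul_mem_Epos hp (hsup.2.1 _ ⟨n, rfl⟩) ((Commute.refl p).sub_right hcomm.symm)
  have hge : p - p ^ 2 ∈ er.Epos := by
    rw [sq, ← mul_one_sub]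
    exact mul_mem_Epos hp hq ((Commute.one_right p).sub_right (Commute.refl p))
  exact (sub_eq_zero.mp (eq_zero_of_mem_Epos_of_neg_mem_Epos hge (by rwa [neg_sub])))

lemma mul_eq_zero_of_isSupIn_carrierSeq (hCV : er.HasCV) (he : e ∈ er.Epos)
    (he1 : 1 - e ∈ er.Epos) (hsup : er.IsSupIn er.G (Set.range (carrierSeq e)) p)
    (hcc : p ∈ er.CC (Set.range (carrierSeq e))) {t : R} (ht : t ∈ er.Epos)
    (ht1 : 1 - t ∈ er.Epos) (het : e * t = 0) (hte : t * e = 0) : t * p = 0 := by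
  have hp : p ∈ er.Epos := mem_Epos_of_isSupIn_carrierSeq hsup
  have hcet : Commute e t := het.trans hte.symm
  have htp : Commute t p :=
    commute_of_mem_CC_range_carrierSeq hcc (mem_G_of_mem_Epos ht) hcet.symm
  have hub : 1 - t - p ∈ er.Epos := by
    refine hsup.2.2 (1 - t) (mem_G_of_mem_Epos ht1) ?_
    rintro _ ⟨n, rfl⟩
    have h : 1 - t - carrierSeq e n = (1 - e) ^ n * (1 - t) := by
      rw [← one_sub_carrierSeq, sub_mul, one_mul, mul_sub, mul_one, carrierSeq_mul_eq_zero het]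
      abel
    rw [le, h]
    exact mul_mem_Epos (pow_mem_Epos he1 n) ht1
      ((Commute.one_right _).sub_right (((Commute.one_left t).sub_left hcet).pow_left n))
  have hneg : -(t * p) ∈ er.Epos := by
    have h := mul_mem_Epos hub hp (((Commute.one_left p).sub_left htp).sub_left (Commute.refl p))
    rwa [sub_mul, sub_mul, one_mul, ← sq, ← eq_sq_of_isSupIn_carrierSeq hCV he he1 hsup hcc,
      sub_sub_cancel_left] at h
  exact eq_zero_of_mem_Epos_of_neg_mem_Epos (mul_mem_Epos ht hp htp) hneg

lemma exists_carrier_of_mem_unitInterval (hQA : er.HasQA) (hCV : er.HasCV)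
    (hhalf : ∃ h ∈ er.E, h + h = 1) (he : e ∈ er.Epos) (he1 : 1 - e ∈ er.Epos) :
    ∃ p ∈ er.P, (∀ x ∈ er.G, e * x = 0 ↔ p * x = 0) ∧
      ∀ y ∈ er.G, Commute y e → Commute y p := by
  obtain ⟨p, hsup, hcc⟩ := exists_isSupIn_carrierSeq hCV he he1
  have hep : e * p = e := by
    have hpe : Commute e p :=
      commute_of_mem_CC_range_carrierSeq hcc (mem_G_of_mem_Epos he) (Commute.refl e)
    have h : e * (1 - p) = 0 := by
      rw [((Commute.one_right e).sub_right hpe).eq]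
      exact one_sub_mul_eq_zero_of_isSupIn_carrierSeq hCV he he1 hsup hcc
    rwa [mul_sub, mul_one, sub_eq_zero, eq_comm] at h
  refine ⟨p, ⟨hsup.1, eq_sq_of_isSupIn_carrierSeq hCV he he1 hsup hcc⟩,
    fun x hx => ⟨fun hex => ?_, fun hpx => by rw [← hep, mul_assoc, hpx, mul_zero]⟩,
    fun y hy hye => commute_of_mem_CC_range_carrierSeq hcc hy hye⟩
  have hxe : x * e = 0 := hQA.mul_eq_zero_comm (mem_G_of_mem_Epos he) hx hex
  have hxp : Commute x p := commute_of_mem_CC_range_carrierSeq hcc hx (hxe.trans hex.symm)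
  obtain ⟨c, hcu, hc, ht, ht1⟩ :=
    exists_central_unit_mul_mem_unitInterval hhalf (sq_mem_Epos_of_mem_G hx)
  have htp : c * x ^ 2 * p = 0 := by
    refine mul_eq_zero_of_isSupIn_carrierSeq hCV he he1 hsup hcc ht ht1 ?_ ?_
    · rw [← mul_assoc, ← (hc e).eq, mul_assoc, sq, ← mul_assoc e, hex, zero_mul, mul_zero]
    · rw [mul_assoc, sq, mul_assoc, hxe, mul_zero, mul_zero]
  rw [mul_assoc, hcu.mul_right_eq_zero] at htp
  refine (hQA p hsup.1 x hx ?_).1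
  rw [← (hxp.pow_left 2).eq, htp, zero_mul]

end Effect

lemma HasQA.eq_of_mem_P_of_forall_mul_eq_zero_iff (hQA : er.HasQA) {p q : R} (hp : p ∈ er.P)
    (hq : q ∈ er.P) (h : ∀ x ∈ er.G, p * x = 0 ↔ q * x = 0) : p = q := by
  have hpi : IsIdempotentElem p := by rw [IsIdempotentElem, ← sq, ← hp.2]
  have hqi : IsIdempotentElem q := by rw [IsIdempotentElem, ← sq, ← hq.2]
  have hq1p : q * (1 - p) = 0 := (h _ (sub_mem_G one_mem_G hp.1)).1 hpi.mul_one_sub_self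
  have h1qp : (1 - q) * p = 0 := hQA.mul_eq_zero_comm hp.1 (sub_mem_G one_mem_G hq.1)
    ((h _ (sub_mem_G one_mem_G hq.1)).2 hqi.mul_one_sub_self)
  rw [sub_mul, one_mul, sub_eq_zero] at h1qp
  rw [mul_sub, mul_one, sub_eq_zero] at hq1p
  exact h1qp.trans hq1p.symm

end ERing

/-- In an AH-algebra, each `g ∈ G` has a unique carrier projection
`g° ∈ P` with `gh = 0 ⇔ g°h = 0` for all `h ∈ G`; moreover `g° ∈ P ∩ CC(g)`. -/
theorem stmt6 {R : Type*} [Ring R] (er : ERing R) (hAH : er.IsAH)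
    (g : R) (hg : g ∈ er.G) :
    ∃ p, (p ∈ er.P ∧ ∀ h ∈ er.G, (g * h = 0 ↔ p * h = 0)) ∧
      p ∈ er.CC {g} ∧
      ∀ q, q ∈ er.P → (∀ h ∈ er.G, (g * h = 0 ↔ q * h = 0)) → q = p := by
  obtain ⟨hhalf, hQA, hCV⟩ := hAH
  obtain ⟨c, hcu, hc, he, he1⟩ :=
    ERing.exists_central_unit_mul_mem_unitInterval hhalf (ERing.sq_mem_Epos_of_mem_G hg)
  obtain ⟨p, hpP, hann, hcomm⟩ :=
    ERing.exists_carrier_of_mem_unitInterval hQA hCV hhalf he he1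
  have hgp : ∀ h ∈ er.G, (g * h = 0 ↔ p * h = 0) := fun h hh => by
    rw [hQA.mul_eq_zero_iff_sq_mul_eq_zero hg hh, ← hcu.mul_right_eq_zero, ← mul_assoc]
    exact hann h hh
  refine ⟨p, ⟨hpP, hgp⟩, ⟨hpP.1, fun a ⟨haG, hag⟩ => ?_⟩, fun q hq hqg => ?_⟩
  · have hag' : Commute a g := hag g rfl
    exact (hcomm a haG ((hc a).symm.mul_right (hag'.pow_right 2))).eq.symm
  · exact hQA.eq_of_mem_P_of_forall_mul_eq_zero_iff hq hpP fun x hx =>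
      (hqg x hx).symm.trans (hgp x hx)
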